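/- arXiv:2508.10158 — 2 statements merged into one kernel-verified Lean document; each statement's English description precedes it below -/
import Mathlib

section
/- Let M be diagonalizable, M = W Λ W^{-1}, with all eigenvalues in an interval [a,b] not containing 0 or 1, A = I - M. If one step of AA(m) (as in Lemma on diagonalizable case) is applied after k fixed-point iterations (with m ≤ k), then \|r_{k+1}\| ≤ C(a,b,m) κ₂(W) \|M\| \|r_k\|, where C(a,b,m) = |T_m((2ab - a - b)/(b - a))|^{-1} with T_m the Chebyshev polynomial of degree m, and κ₂(W) = \|W\| \|W^{-1}\|. -/
/-!
After `k ≥ m` fixed-point steps the residuals form a Krylov sequence, `r_{k-j} = M^{m-j} r_{k-m}`.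
Hence, as `γ'` ranges over `ℝ^m`, the vector `r_k + ∑ γ'_i (r_k - r_{k-i-1})` ranges over all
`q(M) r_{k-m}` with `deg q ≤ m` and `q(1) = 1`, and the residual after the AA step is `M` applied to
the minimiser. The choice `q(t) = t^m T_m(ℓ(1/t)) / T_m(ℓ(1))`, with `ℓ` the affine map sending
`1/a, 1/b` to `1, -1`, satisfies `|q(λ)| ≤ C(a,b,m) |λ|^m` on `[a,b]`, because `ℓ(1/λ) ∈ [-1,1]`
there while `|ℓ(1)| ≥ 1`. Diagonalising `M` turns this into
`‖q(M) r_{k-m}‖ ≤ C(a,b,m) κ₂(W) ‖M^m r_{k-m}‖ = C(a,b,m) κ₂(W) ‖r_k‖`.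
-/

/-- Euclidean (2-)norm of a vector in `Fin n → ℝ`. -/
noncomputable def e2norm {n : ℕ} (v : Fin n → ℝ) : ℝ :=
  ‖(WithLp.equiv 2 (Fin n → ℝ)).symm v‖

/-- Operator 2-norm of a square real matrix. -/
noncomputable def opNorm2 {n : ℕ} (N : Matrix (Fin n) (Fin n) ℝ) : ℝ :=
  ‖Matrix.toEuclideanCLM (𝕜 := ℝ) N‖

/-- The Chebyshev bound `C(a,b,m) = |T_m((2ab-a-b)/(b-a))|⁻¹`. -/
noncomputable def chebC (a b : ℝ) (m : ℕ) : ℝ :=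
  |(Polynomial.Chebyshev.T ℝ (m : ℤ)).eval ((2 * a * b - a - b) / (b - a))|⁻¹

open Polynomial Polynomial.Chebyshev Set Matrix Finset

lemma add_sum_smul_sub_eq_sum_range {R E : Type*} [CommRing R] [AddCommGroup E] [Module R E]
    (u : ℕ → E) (c : ℕ → R) {m : ℕ} (hc : ∑ j ∈ range (m + 1), c j = 1) :
    u 0 + ∑ i : Fin m, (-c (i + 1)) • (u 0 - u (i + 1)) = ∑ j ∈ range (m + 1), c j • u j := by
  rw [sum_range_succ'] at hc ⊢
  rw [Fin.sum_univ_eq_sum_range (fun i => (-c (i + 1)) • (u 0 - u (i + 1))),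
    eq_sub_of_add_eq' hc]
  simp only [neg_smul, smul_sub, sum_neg_distrib, sum_sub_distrib, ← sum_smul, sub_smul,
    one_smul]
  abel

lemma Polynomial.sum_range_coeff_sub_eq_eval_one {R : Type*} [CommRing R] {q : R[X]} {m : ℕ}
    (hq : q.natDegree ≤ m) : ∑ j ∈ range (m + 1), q.coeff (m - j) = q.eval 1 := by
  rw [eval_eq_sum_range' (Nat.lt_succ_of_le hq), ← sum_range_reflect]
  refine sum_congr rfl fun j hj => ?_
  have hj : j ≤ m := Nat.lt_succ_iff.mp (mem_range.mp hj)
  rw [one_pow, mul_one, Nat.add_sub_cancel, Nat.sub_sub_self hj]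

section

variable {ι R : Type*} [Fintype ι] [CommRing R]

lemma sub_mulVec_add_sum_smul_sub (A : Matrix ι ι R) (f y : ι → R) {m : ℕ}
    (z : Fin m → ι → R) (γ : Fin m → R) :
    f - A *ᵥ (y + ∑ i, γ i • (y - z i)) =
      (f - A *ᵥ y) + ∑ i, γ i • ((f - A *ᵥ y) - (f - A *ᵥ z i)) := by
  simp only [mulVec_add, mulVec_sum, mulVec_smul, mulVec_sub, sub_sub_sub_cancel_left,
    smul_sub, sum_sub_distrib]
  abel

variable [DecidableEq ι]

lemma residual_mulVec_add (M : Matrix ι ι R) (f x : ι → R) :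
    f - (1 - M) *ᵥ (M *ᵥ x + f) = M *ᵥ (f - (1 - M) *ᵥ x) := by
  simp only [sub_mulVec, one_mulVec, mulVec_add, mulVec_sub]
  abel

lemma residual_andersonStep (M : Matrix ι ι R) (f y : ι → R) {m : ℕ}
    (z : Fin m → ι → R) (γ : Fin m → R) :
    f - (1 - M) *ᵥ ((M *ᵥ y + f) + ∑ i, γ i • ((M *ᵥ y + f) - (M *ᵥ z i + f))) =
      M *ᵥ ((f - (1 - M) *ᵥ y) + ∑ i, γ i • ((f - (1 - M) *ᵥ y) - (f - (1 - M) *ᵥ z i))) := by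
  simp only [sub_mulVec_add_sum_smul_sub, residual_mulVec_add]
  rw [mulVec_add M, mulVec_sum]
  simp only [mulVec_smul, mulVec_sub]

lemma eq_pow_mulVec_of_succ {M : Matrix ι ι R} {r : ℕ → ι → R} {k : ℕ}
    (hr : ∀ j < k, r (j + 1) = M *ᵥ r j) {i j : ℕ} (hij : i + j ≤ k) :
    r (i + j) = (M ^ j) *ᵥ r i := by
  induction j with
  | zero => simp
  | succ j ih =>
    rw [← add_assoc, hr _ (by omega), ih (by omega), mulVec_mulVec, pow_succ']

lemma sum_range_coeff_sub_smul_eq_aeval_mulVec {M : Matrix ι ι R} {r : ℕ → ι → R} {k m : ℕ}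
    (hr : ∀ j < k, r (j + 1) = M *ᵥ r j) (hm : m ≤ k) {q : R[X]} (hq : q.natDegree ≤ m) :
    ∑ j ∈ range (m + 1), q.coeff (m - j) • r (k - j) = aeval M q *ᵥ r (k - m) := by
  rw [aeval_eq_sum_range' (Nat.lt_succ_of_le hq), sum_mulVec, ← sum_range_reflect]
  refine sum_congr rfl fun j hj => ?_
  have hj : j ≤ m := Nat.lt_succ_iff.mp (mem_range.mp hj)
  rw [smul_mulVec, ← eq_pow_mulVec_of_succ hr (by omega), Nat.add_sub_cancel]
  congr 3 <;> omega

lemma Matrix.aeval_diagonal (d : ι → R) (p : R[X]) :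
    aeval (diagonal d) p = diagonal fun i => p.eval (d i) := by
  rw [← diagonalAlgHom_apply R, aeval_algHom_apply, aeval_pi_apply]
  rfl

lemma Matrix.aeval_conj {W : Matrix ι ι R} (hW : IsUnit W.det) (D : Matrix ι ι R) (p : R[X]) :
    aeval (W * D * W⁻¹) p = W * aeval D p * W⁻¹ := by
  obtain ⟨u, rfl⟩ := (isUnit_iff_isUnit_det W).mpr hW
  rw [← coe_units_inv]
  induction p using Polynomial.induction_on' with
  | add p q hp hq => rw [map_add, map_add, hp, hq, Matrix.mul_add, Matrix.add_mul]
  | monomial j c =>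
    simp only [aeval_monomial, Units.conj_pow, ← Algebra.smul_def, Matrix.mul_smul,
      Matrix.smul_mul]

end

lemma opNorm2_nonneg {n : ℕ} (N : Matrix (Fin n) (Fin n) ℝ) : 0 ≤ opNorm2 N := norm_nonneg _

lemma e2norm_mulVec_le {n : ℕ} (N : Matrix (Fin n) (Fin n) ℝ) (v : Fin n → ℝ) :
    e2norm (N *ᵥ v) ≤ opNorm2 N * e2norm v := by
  rw [e2norm, e2norm, opNorm2, WithLp.equiv_symm_apply, ← toEuclideanCLM_toLp]
  exact (toEuclideanCLM (𝕜 := ℝ) N).le_opNorm _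

lemma e2norm_le_of_abs_le {n : ℕ} {c : ℝ} (hc : 0 ≤ c) {u v : Fin n → ℝ}
    (h : ∀ i, |u i| ≤ c * |v i|) : e2norm u ≤ c * e2norm v := by
  simp only [e2norm, EuclideanSpace.norm_eq, WithLp.equiv_symm_apply, Real.norm_eq_abs]
  rw [← Real.sqrt_sq hc, ← Real.sqrt_mul (sq_nonneg c), Finset.mul_sum]
  gcongr with i
  rw [← mul_pow]
  exact pow_le_pow_left₀ (abs_nonneg _) (h i) 2

lemma e2norm_aeval_mulVec_le {n : ℕ} {W M : Matrix (Fin n) (Fin n) ℝ} (hW : IsUnit W.det)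
    {d : Fin n → ℝ} (hM : M = W * diagonal d * W⁻¹) {p q : ℝ[X]} {C : ℝ} (hC : 0 ≤ C)
    (hpq : ∀ i, |q.eval (d i)| ≤ C * |p.eval (d i)|) (v : Fin n → ℝ) :
    e2norm (aeval M q *ᵥ v) ≤ C * (opNorm2 W * opNorm2 W⁻¹) * e2norm (aeval M p *ᵥ v) := by
  have h_diag : ∀ r : ℝ[X],
      aeval M r *ᵥ v = W *ᵥ (diagonal (fun i => r.eval (d i)) *ᵥ (W⁻¹ *ᵥ v)) := fun r => by
    rw [hM, aeval_conj hW, aeval_diagonal, mulVec_mulVec, mulVec_mulVec]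
  have h_inv : diagonal (fun i => p.eval (d i)) *ᵥ (W⁻¹ *ᵥ v) = W⁻¹ *ᵥ (aeval M p *ᵥ v) := by
    rw [h_diag, mulVec_mulVec _ W⁻¹ W, nonsing_inv_mul _ hW, one_mulVec]
  have h_pointwise : e2norm (diagonal (fun i => q.eval (d i)) *ᵥ (W⁻¹ *ᵥ v)) ≤
      C * e2norm (diagonal (fun i => p.eval (d i)) *ᵥ (W⁻¹ *ᵥ v)) :=
    e2norm_le_of_abs_le hC fun i => by
      simp only [mulVec_diagonal, abs_mul, ← mul_assoc]
      exact mul_le_mul_of_nonneg_right (hpq i) (abs_nonneg _)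
  calc e2norm (aeval M q *ᵥ v)
      ≤ opNorm2 W * e2norm (diagonal (fun i => q.eval (d i)) *ᵥ (W⁻¹ *ᵥ v)) := by
        rw [h_diag]; exact e2norm_mulVec_le _ _
    _ ≤ opNorm2 W * (C * (opNorm2 W⁻¹ * e2norm (aeval M p *ᵥ v))) := by
        rw [h_inv] at h_pointwise
        gcongr
        · exact opNorm2_nonneg W
        · exact h_pointwise.trans (by gcongr; exact e2norm_mulVec_le _ _)
    _ = C * (opNorm2 W * opNorm2 W⁻¹) * e2norm (aeval M p *ᵥ v) := by ring

lemma Polynomial.eval_reflect {K : Type*} [Field K] {f : K[X]} {N : ℕ} (hf : f.natDegree ≤ N)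
    {t : K} (ht : t ≠ 0) : (f.reflect N).eval t = t ^ N * f.eval t⁻¹ := by
  let _ := invertibleOfNonzero (inv_ne_zero ht)
  have h := eval₂_reflect_mul_pow (RingHom.id K) t⁻¹ N f hf
  rw [invOf_eq_inv, inv_inv, eval₂_id, eval₂_id, inv_pow] at h
  rw [← h, mul_comm, inv_mul_cancel_right₀ (pow_ne_zero N ht)]

lemma chebC_nonneg (a b : ℝ) (m : ℕ) : 0 ≤ chebC a b m := inv_nonneg.mpr (abs_nonneg _)

lemma mul_div_mem_Icc {a b d : ℝ} (hab : 0 < a * b) (hd : d ∈ Icc a b) :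
    a * b / d ∈ Icc a b := by
  obtain ⟨had, hdb⟩ := hd
  rcases lt_or_gt_of_ne (show a ≠ 0 by rintro rfl; simp at hab) with ha | ha
  · have hd_neg : d < 0 := by nlinarith
    constructor
    · rw [le_div_iff_of_neg hd_neg]; nlinarith
    · rw [div_le_iff_of_neg hd_neg]; nlinarith
  · have hd_pos : 0 < d := by linarith
    constructor
    · rw [le_div_iff₀ hd_pos]; nlinarith
    · rw [div_le_iff₀ hd_pos]; nlinarith

lemma zero_lt_mul_of_zero_notMem_Icc {a b : ℝ} (hab : a < b) (h0 : (0 : ℝ) ∉ Icc a b) :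
    0 < a * b := by
  simp only [Set.mem_Icc, not_and_or, not_le] at h0
  rcases h0 with h | h <;> nlinarith

lemma div_sub_mem_Icc_neg_one_one {a b d : ℝ} (hab : a < b) (hab0 : 0 < a * b)
    (hd : d ∈ Icc a b) : (2 * a * b * d⁻¹ - a - b) / (b - a) ∈ Icc (-1 : ℝ) 1 := by
  obtain ⟨h1, h2⟩ := mul_div_mem_Icc hab0 hd
  have hba : 0 < b - a := sub_pos.mpr hab
  rw [show 2 * a * b * d⁻¹ = 2 * (a * b / d) by ring]
  constructor
  · rw [le_div_iff₀ hba]; linarith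
  · rw [div_le_iff₀ hba]; linarith

lemma one_le_abs_chebC_arg {a b : ℝ} (hab : a < b) (h0 : (0 : ℝ) ∉ Icc a b)
    (h1 : (1 : ℝ) ∉ Icc a b) : 1 ≤ |(2 * a * b - a - b) / (b - a)| := by
  have hba : 0 < b - a := sub_pos.mpr hab
  simp only [Set.mem_Icc, not_and_or, not_le] at h0 h1
  rw [abs_div, abs_of_pos hba, le_div_iff₀ hba, one_mul, le_abs]
  rcases h0 with h0 | h0 <;> rcases h1 with h1 | h1
  all_goals first | (left; nlinarith) | (right; nlinarith)

lemma exists_poly_abs_eval_le_chebC_mul {a b : ℝ} (hab : a < b) (h0 : (0 : ℝ) ∉ Icc a b)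
    (h1 : (1 : ℝ) ∉ Icc a b) (m : ℕ) :
    ∃ q : ℝ[X], q.natDegree ≤ m ∧ q.eval 1 = 1 ∧
      ∀ t ∈ Icc a b, |q.eval t| ≤ chebC a b m * |t ^ m| := by
  set ℓ : ℝ[X] := C (2 * a * b / (b - a)) * X - C ((a + b) / (b - a))
  have hℓ : ∀ u, ℓ.eval u = (2 * a * b * u - a - b) / (b - a) := fun u => by
    simp only [ℓ, eval_sub, eval_mul, eval_C, eval_X]; ring
  set τ := (T ℝ m).eval ((2 * a * b - a - b) / (b - a))
  have hτ : 1 ≤ |τ| := one_le_abs_eval_T_real _ (one_le_abs_chebC_arg hab h0 h1)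
  set s : ℝ[X] := C τ⁻¹ * (T ℝ m).comp ℓ
  have hs : s.natDegree ≤ m := by
    have hℓ_deg : ℓ.natDegree ≤ 1 := by simp only [ℓ]; compute_degree
    refine (natDegree_C_mul_le _ _).trans (natDegree_comp_le.trans ?_)
    rw [natDegree_T, Int.natAbs_natCast]
    simpa using Nat.mul_le_mul_left m hℓ_deg
  have hs_eval : ∀ u, s.eval u = τ⁻¹ * (T ℝ m).eval ((2 * a * b * u - a - b) / (b - a)) := by
    intro u; rw [eval_mul, eval_C, eval_comp, hℓ]
  refine ⟨s.reflect m, natDegree_reflect_le.trans (max_le le_rfl hs), ?_, ?_⟩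
  · rw [eval_reflect hs one_ne_zero, inv_one, hs_eval, mul_one, one_pow, one_mul]
    exact inv_mul_cancel₀ (abs_pos.mp (one_pos.trans_le hτ))
  · intro t ht
    have ht0 : t ≠ 0 := by rintro rfl; exact h0 ht
    rw [eval_reflect hs ht0, hs_eval, abs_mul, abs_mul, abs_inv, mul_comm, chebC]
    gcongr
    refine mul_le_of_le_one_right (by positivity) (abs_eval_T_real_le_one _ (abs_le.mpr ?_))
    exact div_sub_mem_Icc_neg_one_one hab (zero_lt_mul_of_zero_notMem_Icc hab h0) ht

/-- One-step gain bound: if `M = W Λ W⁻¹` is diagonalizable with eigenvalues in `[a,b]`,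
`0, 1 ∉ [a,b]`, the first `k` iterates are fixed-point (Richardson) iterates, and
`x_{k+1}` is one step of AA(m) with `m ≤ k`, then
`‖r_{k+1}‖ ≤ C(a,b,m) κ₂(W) ‖M‖ ‖r_k‖`. -/
theorem stmt_5 (n : ℕ) (a b : ℝ) (hab : a < b)
    (h0 : (0 : ℝ) ∉ Set.Icc a b) (h1 : (1 : ℝ) ∉ Set.Icc a b)
    (W M : Matrix (Fin n) (Fin n) ℝ) (hW : IsUnit W.det)
    (d : Fin n → ℝ) (hd : ∀ i, d i ∈ Set.Icc a b)
    (hM : M = W * Matrix.diagonal d * W⁻¹)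
    (A : Matrix (Fin n) (Fin n) ℝ) (hA : A = 1 - M)
    (f : Fin n → ℝ) (x : ℕ → Fin n → ℝ) (k m : ℕ) (hm : m ≤ k)
    (hfp : ∀ j < k, x (j + 1) = M.mulVec (x j) + f)
    (γ : Fin m → ℝ)
    (hmin : ∀ γ' : Fin m → ℝ,
      e2norm ((f - A.mulVec (x k)) + ∑ i : Fin m, γ i •
          ((f - A.mulVec (x k)) - (f - A.mulVec (x (k - (i.1 + 1)))))) ≤
      e2norm ((f - A.mulVec (x k)) + ∑ i : Fin m, γ' i •
          ((f - A.mulVec (x k)) - (f - A.mulVec (x (k - (i.1 + 1)))))))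
    (xk1 : Fin n → ℝ)
    (hstep : xk1 = (M.mulVec (x k) + f) + ∑ i : Fin m, γ i •
        ((M.mulVec (x k) + f) - (M.mulVec (x (k - (i.1 + 1))) + f))) :
    e2norm (f - A.mulVec xk1) ≤
      chebC a b m * (opNorm2 W * opNorm2 W⁻¹) * opNorm2 M *
        e2norm (f - A.mulVec (x k)) := by
  subst hA
  set r : ℕ → Fin n → ℝ := fun j => f - (1 - M) *ᵥ x j
  have hr : ∀ j < k, r (j + 1) = M *ᵥ r j := fun j hj => by
    simp only [r, hfp j hj, residual_mulVec_add]
  obtain ⟨q, hq_deg, hq_one, hq_bound⟩ := exists_poly_abs_eval_le_chebC_mul hab h0 h1 m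
  have h_res :
      f - (1 - M) *ᵥ xk1 = M *ᵥ (r k + ∑ i : Fin m, γ i • (r k - r (k - (i.1 + 1)))) := by
    rw [hstep, residual_andersonStep]
  have h_comp : r k + ∑ i : Fin m, (-q.coeff (m - (i.1 + 1))) • (r k - r (k - (i.1 + 1))) =
      aeval M q *ᵥ r (k - m) :=
    (add_sum_smul_sub_eq_sum_range (fun j => r (k - j)) (fun j => q.coeff (m - j))
      (by rw [sum_range_coeff_sub_eq_eval_one hq_deg, hq_one])).trans
      (sum_range_coeff_sub_smul_eq_aeval_mulVec hr hm hq_deg)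
  have h_rk : aeval M (X ^ m : ℝ[X]) *ᵥ r (k - m) = r k := by
    rw [aeval_X_pow, ← eq_pow_mulVec_of_succ hr (by omega), Nat.sub_add_cancel hm]
  have h_cheb := e2norm_aeval_mulVec_le hW hM (p := (X ^ m : ℝ[X])) (chebC_nonneg a b m)
    (fun i => by simpa using hq_bound _ (hd i)) (r (k - m))
  rw [h_rk] at h_cheb
  calc e2norm (f - (1 - M) *ᵥ xk1)
      ≤ opNorm2 M * e2norm (r k + ∑ i : Fin m, γ i • (r k - r (k - (i.1 + 1)))) := by
        rw [h_res]; exact e2norm_mulVec_le _ _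
    _ ≤ opNorm2 M * e2norm (aeval M q *ᵥ r (k - m)) := by
        gcongr
        · exact opNorm2_nonneg M
        · rw [← h_comp]; exact hmin _
    _ ≤ opNorm2 M * (chebC a b m * (opNorm2 W * opNorm2 W⁻¹) * e2norm (r k)) := by
        gcongr
        exact opNorm2_nonneg M
    _ = chebC a b m * (opNorm2 W * opNorm2 W⁻¹) * opNorm2 M * e2norm (r k) := by ring
end

section
/- Let M = W Λ W^{-1} be diagonalizable with eigenvalues in [a,b], 0,1 ∉ [a,b], and A = I - M. Suppose an 'alternating' scheme produces x_{jp} from x_{(j-1)p} by t fixed-point steps followed by s Anderson steps (p = t+s, m ≤ t), where each Anderson step does not increase the residual by more than a factor \|M\| and the first Anderson step after the fixed-point steps satisfies the one-step gain bound. Then \|r_{jp}\| ≤ (C(a,b,m) κ₂(W))^j \|M\|^{jp} \|r_0\|. -/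
/- In each period the `s - 1` Anderson steps after the first one cost at most `‖M‖` each, and
the first one, by the one-step gain bound, costs `C(a,b,m) κ₂(W) ‖M‖^(t+1)` over the whole
stretch of `t` fixed-point steps preceding it. So one period contracts the residual by
`C(a,b,m) κ₂(W) ‖M‖^p`, and iterating over `j` periods gives the bound. -/

lemma le_mul_pow_of_step_of_period {u : ℕ → ℝ} {c K : ℝ} {s t k : ℕ} (hc : 0 ≤ c)
    (hstep : ∀ i, u (i + 1) ≤ c * u i) (hs : 1 ≤ s)
    (hperiod : u (k + t + 1) ≤ K * c ^ (t + 1) * u k) :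
    u (k + (s + t)) ≤ K * c ^ (s + t) * u k := by
  have htail : u (k + t + 1 + (s - 1)) ≤ c ^ (s - 1) * u (k + t + 1) :=
    le_geom (u := fun i => u (k + t + 1 + i)) hc (s - 1) fun i _ => hstep _
  calc u (k + (s + t)) = u (k + t + 1 + (s - 1)) := by congr 1; omega
    _ ≤ c ^ (s - 1) * (K * c ^ (t + 1) * u k) :=
        htail.trans (mul_le_mul_of_nonneg_left hperiod (pow_nonneg hc _))
    _ = K * c ^ (s + t) * u k := by
        rw [show s + t = (s - 1) + (t + 1) by omega, pow_add]; ring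

theorem stmt_10_general (n : ℕ) (a b : ℝ)
    (W M : Matrix (Fin n) (Fin n) ℝ)
    (r : ℕ → Fin n → ℝ)
    (m s t p : ℕ) (hs : 1 ≤ s) (hp : p = s + t)
    (hstep : ∀ k, e2norm (r (k + 1)) ≤ opNorm2 M * e2norm (r k))
    (hAA : ∀ j : ℕ, 1 ≤ j →
      e2norm (r (j * p - s + 1)) ≤
        chebC a b m * (opNorm2 W * opNorm2 W⁻¹) * opNorm2 M ^ (t + 1) *
          e2norm (r ((j - 1) * p))) :
    ∀ j : ℕ, e2norm (r (j * p)) ≤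
      (chebC a b m * (opNorm2 W * opNorm2 W⁻¹)) ^ j * opNorm2 M ^ (j * p) *
        e2norm (r 0) := by
  intro j
  set K := chebC a b m * (opNorm2 W * opNorm2 W⁻¹)
  have hc : 0 ≤ opNorm2 M := norm_nonneg _
  have hK : 0 ≤ K := by unfold K chebC opNorm2; positivity
  have hperiod : ∀ i, e2norm (r ((i + 1) * p)) ≤ K * opNorm2 M ^ p * e2norm (r (i * p)) := by
    intro i
    have hend : (i + 1) * p = i * p + t + s := by rw [hp]; ring
    have hfirst := hAA (i + 1) (by omega)
    rw [show (i + 1) * p - s + 1 = i * p + t + 1 by omega, Nat.add_sub_cancel] at hfirst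
    have hblock := le_mul_pow_of_step_of_period (u := fun k => e2norm (r k)) hc hstep hs hfirst
    rwa [← hp, show i * p + p = (i + 1) * p by ring] at hblock
  calc e2norm (r (j * p)) ≤ (K * opNorm2 M ^ p) ^ j * e2norm (r (0 * p)) :=
        le_geom (u := fun i => e2norm (r (i * p))) (by positivity) j fun i _ => hperiod i
    _ = K ^ j * opNorm2 M ^ (j * p) * e2norm (r 0) := by
        rw [mul_pow, ← pow_mul, mul_comm p j, zero_mul]

/-- Residual bound for the alternating scheme aAA(m)[s]--FP[t] (`p = s + t`, `m ≤ t`):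
if every step increases the residual norm by at most a factor `‖M‖`, and the Anderson
step following the `t` fixed-point steps of each period satisfies the one-step gain bound,
then `‖r_{jp}‖ ≤ (C(a,b,m) κ₂(W))^j ‖M‖^{jp} ‖r_0‖`. -/
theorem stmt_10 (n : ℕ) (a b : ℝ) (hab : a < b)
    (h0 : (0 : ℝ) ∉ Set.Icc a b) (h1 : (1 : ℝ) ∉ Set.Icc a b)
    (W M : Matrix (Fin n) (Fin n) ℝ) (hW : IsUnit W.det)
    (d : Fin n → ℝ) (hd : ∀ i, d i ∈ Set.Icc a b)
    (hM : M = W * Matrix.diagonal d * W⁻¹)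
    (A : Matrix (Fin n) (Fin n) ℝ) (hA : A = 1 - M)
    (f : Fin n → ℝ) (x : ℕ → Fin n → ℝ)
    (r : ℕ → Fin n → ℝ) (hr : ∀ k, r k = f - A.mulVec (x k))
    (m s t p : ℕ) (hmt : m ≤ t) (hs : 1 ≤ s) (hp : p = s + t)
    (hstep : ∀ k, e2norm (r (k + 1)) ≤ opNorm2 M * e2norm (r k))
    (hAA : ∀ j : ℕ, 1 ≤ j →
      e2norm (r (j * p - s + 1)) ≤
        chebC a b m * (opNorm2 W * opNorm2 W⁻¹) * opNorm2 M ^ (t + 1) *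
          e2norm (r ((j - 1) * p))) :
    ∀ j : ℕ, e2norm (r (j * p)) ≤
      (chebC a b m * (opNorm2 W * opNorm2 W⁻¹)) ^ j * opNorm2 M ^ (j * p) *
        e2norm (r 0) :=
  stmt_10_general n a b W M r m s t p hs hp hstep hAA
end
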